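/- arXiv:1907.04720 — 2 statements merged into one kernel-verified Lean document; each statement's English description precedes it below -/
import Mathlib

section
/- The map Z : ℝ³ → ℝ³ is locally Lipschitz: every point of ℝ³ has a neighbourhood on which Z is Lipschitz with respect to the Euclidean metric. -/
/-- Explicit vector in ℝ³ (with the Euclidean norm). -/
def vec3 (a b c : ℝ) : EuclideanSpace ℝ (Fin 3) := WithLp.toLp 2 ![a, b, c]

/-- The 4-periodic sawtooth: h(t) = t on [-1,1], h(t) = 2 - t on [1,3]. -/
noncomputable def h (t : ℝ) : ℝ := 1 - |4 * Int.fract ((t + 1) / 4) - 2|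

/-- The sign function ε(t) = (-1)^⌊(t+1)/2⌋. -/
noncomputable def eps (t : ℝ) : ℝ := (-1 : ℝ) ^ ⌊(t + 1) / 2⌋

/-- The Zorich-type map Z : ℝ³ → ℝ³. -/
noncomputable def Z (x : EuclideanSpace ℝ (Fin 3)) : EuclideanSpace ℝ (Fin 3) :=
  Real.exp (x 2) •
    vec3 (h (x 0)) (h (x 1)) (eps (x 0) * eps (x 1) * (1 - max |h (x 0)| |h (x 1)|))

/-- Rotation by π about the vertical line {(u,v,t) : t ∈ ℝ}. -/
noncomputable def Rot (u v : ℝ) (x : EuclideanSpace ℝ (Fin 3)) : EuclideanSpace ℝ (Fin 3) :=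
  vec3 (2 * u - x 0) (2 * v - x 1) (x 2)
/-!
The sawtooth `h` is `4 · dist((t + 1)/4, ℤ) - 1`, hence 1-Lipschitz. The third coordinate of `Z`,
despite the sign factors `ε`, is continuous: since `h (t + 1) = ε t · (1 - |h t|)`, it equals
`max (min u v) (min (-u) (-v))` with `u = h (x₁ + 1)`, `v = h (x₂ + 1)`, a Lipschitz expression.
So `Z` is the smooth map `(t, a, b, c) ↦ eᵗ (a, b, c)` composed with a Lipschitz map.
-/

open Function Set

lemma h_eq_four_mul_abs_sub_round (t : ℝ) :
    h t = 4 * |(t + 1) / 4 - round ((t + 1) / 4)| - 1 := by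
  rw [h, abs_sub_round_eq_min]
  rcases le_total (Int.fract ((t + 1) / 4)) (1 / 2) with hf | hf
  · rw [min_eq_left (by linarith), abs_of_nonpos (by linarith)]; ring
  · rw [min_eq_right (by linarith), abs_of_nonneg (by linarith)]; ring

lemma abs_h_le_one (t : ℝ) : |h t| ≤ 1 := by
  rw [h_eq_four_mul_abs_sub_round]
  have hround := abs_sub_round ((t + 1) / 4)
  exact abs_le.2 ⟨by linarith [abs_nonneg ((t + 1) / 4 - round ((t + 1) / 4))], by linarith⟩

lemma lipschitzWith_abs_sub_round : LipschitzWith 1 fun x : ℝ => |x - round x| :=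
  LipschitzWith.of_le_add fun x y =>
    calc |x - round x| ≤ |x - round y| := round_le x (round y)
      _ ≤ |y - round y| + dist x y := by
        rw [Real.dist_eq]; linarith [abs_sub_le x y (round y), abs_sub_comm x y]

lemma lipschitzWith_h : LipschitzWith 1 h := by
  refine LipschitzWith.of_dist_le_mul fun a b => ?_
  have hround := lipschitzWith_abs_sub_round.dist_le_mul ((a + 1) / 4) ((b + 1) / 4)
  simp only [Real.dist_eq, NNReal.coe_one, one_mul] at hround ⊢
  calc |h a - h b|
      = 4 * |(|(a + 1) / 4 - round ((a + 1) / 4)| - |(b + 1) / 4 - round ((b + 1) / 4)|)| := by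
        rw [h_eq_four_mul_abs_sub_round, h_eq_four_mul_abs_sub_round, sub_sub_sub_cancel_right,
          ← mul_sub, abs_mul, abs_of_pos (four_pos : (0 : ℝ) < 4)]
    _ ≤ 4 * |(a + 1) / 4 - (b + 1) / 4| := by gcongr
    _ = |a - b| := by
        rw [show (a + 1) / 4 - (b + 1) / 4 = (a - b) / 4 by ring, abs_div,
          abs_of_pos (four_pos : (0 : ℝ) < 4)]
        ring

lemma h_periodic : Periodic h 4 := fun t => by
  rw [h, h, show (t + 4 + 1) / 4 = (t + 1) / 4 + 1 by ring, Int.fract_add_one]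

lemma eps_periodic : Periodic eps 4 := fun t => by
  rw [eps, eps, show (t + 4 + 1) / 2 = (t + 1) / 2 + (2 : ℤ) by push_cast; ring,
    Int.floor_add_intCast, zpow_add₀ (by norm_num)]
  norm_num

lemma eps_eq_one_or_neg_one (t : ℝ) : eps t = 1 ∨ eps t = -1 :=
  (Int.even_or_odd ⌊(t + 1) / 2⌋).imp Even.neg_one_zpow Odd.neg_one_zpow

lemma h_of_mem_Ico {t : ℝ} (ht : t ∈ Ico (-1) 3) : h t = 1 - |t - 1| := by
  rw [h, Int.fract_eq_self.2 ⟨by linarith [ht.1], by linarith [ht.2]⟩,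
    show 4 * ((t + 1) / 4) - 2 = t - 1 by ring]

lemma eps_of_mem_Ico_neg_one_one {t : ℝ} (ht : t ∈ Ico (-1) 1) : eps t = 1 := by
  rw [eps, Int.floor_eq_zero_iff.2 ⟨by linarith [ht.1], by linarith [ht.2]⟩, zpow_zero]

lemma eps_of_mem_Ico_one_three {t : ℝ} (ht : t ∈ Ico 1 3) : eps t = -1 := by
  have hfloor : ⌊(t + 1) / 2⌋ = 1 :=
    Int.floor_eq_iff.2 ⟨by push_cast; linarith [ht.1], by push_cast; linarith [ht.2]⟩
  rw [eps, hfloor, zpow_one]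

lemma h_add_one_of_mem_Ico {t : ℝ} (ht : t ∈ Ico (-1) 3) :
    h (t + 1) = eps t * (1 - |h t|) := by
  obtain ⟨ht₁, ht₃⟩ := ht
  rw [h_of_mem_Ico ⟨ht₁, ht₃⟩]
  rcases lt_or_ge t 1 with ht1 | ht1
  · rw [eps_of_mem_Ico_neg_one_one ⟨ht₁, ht1⟩, h_of_mem_Ico ⟨by linarith, by linarith⟩,
      abs_of_neg (by linarith : t - 1 < 0)]
    ring_nf
  rw [eps_of_mem_Ico_one_three ⟨ht1, ht₃⟩, abs_of_nonneg (by linarith : 0 ≤ t - 1)]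
  rcases lt_or_ge t 2 with ht2 | ht2
  · rw [h_of_mem_Ico ⟨by linarith, by linarith⟩, abs_of_nonneg (by linarith : 0 ≤ t + 1 - 1),
      abs_of_nonneg (by linarith : 0 ≤ 1 - (t - 1))]
    ring
  · rw [show t + 1 = t - 3 + 4 by ring, h_periodic, h_of_mem_Ico ⟨by linarith, by linarith⟩,
      abs_of_neg (by linarith : t - 3 - 1 < 0), abs_of_nonpos (by linarith : 1 - (t - 1) ≤ 0)]
    ring

lemma h_add_one (t : ℝ) : h (t + 1) = eps t * (1 - |h t|) := by
  have hper : Periodic (fun t => h (t + 1) - eps t * (1 - |h t|)) 4 := fun t => by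
    simp only [add_right_comm t 4 1, h_periodic _, eps_periodic t]
  obtain ⟨s, hs, hts⟩ := hper.exists_mem_Ico four_pos t (-1)
  rw [← sub_eq_zero, hts, h_add_one_of_mem_Ico (by norm_num at hs; exact hs), sub_self]

lemma mul_mul_min_eq_max_min_min {ε δ p q : ℝ} (hε : ε = 1 ∨ ε = -1) (hδ : δ = 1 ∨ δ = -1)
    (hp : 0 ≤ p) (hq : 0 ≤ q) :
    ε * δ * min p q = max (min (ε * p) (δ * q)) (min (-(ε * p)) (-(δ * q))) := by
  rcases hε with rfl | rfl <;> rcases hδ with rfl | rfl <;>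
    rcases le_total p q with hpq | hpq <;> simp [hpq, hp, hq] <;> linarith

lemma eps_mul_eps_mul_one_sub_max_eq (a b : ℝ) :
    eps a * eps b * (1 - max |h a| |h b|) =
      max (min (h (a + 1)) (h (b + 1))) (min (-h (a + 1)) (-h (b + 1))) := by
  rw [h_add_one, h_add_one, ← min_sub_sub_left]
  exact mul_mul_min_eq_max_min_min (eps_eq_one_or_neg_one a) (eps_eq_one_or_neg_one b)
    (sub_nonneg.2 (abs_h_le_one a)) (sub_nonneg.2 (abs_h_le_one b))

lemma LocallyLipschitz.eps_mul_eps_mul_one_sub_max {X : Type*} [PseudoEMetricSpace X]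
    {f g : X → ℝ} (hf : LocallyLipschitz f) (hg : LocallyLipschitz g) :
    LocallyLipschitz fun x => eps (f x) * eps (g x) * (1 - max |h (f x)| |h (g x)|) := by
  simp_rw [eps_mul_eps_mul_one_sub_max_eq]
  have hshift {u : X → ℝ} (hu : LocallyLipschitz u) : LocallyLipschitz fun x => h (u x + 1) :=
    lipschitzWith_h.locallyLipschitz.comp (hu.add (LocallyLipschitz.const 1))
  exact ((hshift hf).min (hshift hg)).max ((hshift hf).neg.min (hshift hg).neg)

lemma locallyLipschitz_exp_smul_vec3 :
    LocallyLipschitz fun p : ℝ × ℝ × ℝ × ℝ => Real.exp p.1 • vec3 p.2.1 p.2.2.1 p.2.2.2 := by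
  refine ContDiff.locallyLipschitz (𝕂 := ℝ) <| (Real.contDiff_exp.comp contDiff_fst).smul
    (PiLp.contDiff_toLp.comp (contDiff_pi.2 fun i => ?_))
  fin_cases i <;> simp <;> fun_prop

/-- The map Z : ℝ³ → ℝ³ is locally Lipschitz: every point of ℝ³ has a
    neighbourhood on which Z is Lipschitz (w.r.t. the Euclidean metric). -/
theorem zorich_locally_lipschitz :
    ∀ x : EuclideanSpace ℝ (Fin 3), ∃ K : NNReal, ∃ U ∈ nhds x, LipschitzOnWith K Z U := by
  have hcoord (i : Fin 3) : LocallyLipschitz fun y : EuclideanSpace ℝ (Fin 3) => y i :=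
    (EuclideanSpace.proj i : EuclideanSpace ℝ (Fin 3) →L[ℝ] ℝ).lipschitz.locallyLipschitz
  have hh (i : Fin 3) : LocallyLipschitz fun y : EuclideanSpace ℝ (Fin 3) => h (y i) :=
    lipschitzWith_h.locallyLipschitz.comp (hcoord i)
  have hcoords : LocallyLipschitz fun y : EuclideanSpace ℝ (Fin 3) =>
      (y 2, h (y 0), h (y 1), eps (y 0) * eps (y 1) * (1 - max |h (y 0)| |h (y 1)|)) :=
    (hcoord 2).prodMk <| (hh 0).prodMk <| (hh 1).prodMk <|
      (hcoord 0).eps_mul_eps_mul_one_sub_max (hcoord 1)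
  -- Elaborated without the expected type: unifying `?f ∘ ?g` with `Z` first times out.
  exact (locallyLipschitz_exp_smul_vec3.comp hcoords :)
end

section
/- Let B_Z = {(2n+1, 2m+1, t) : n, m ∈ ℤ, t ∈ ℝ} be the branch set of Z. Then Z(B_Z) ∪ {0} = {t·(1,1,0) : t ∈ ℝ} ∪ {t·(-1,1,0) : t ∈ ℝ}. -/
/-- The branch set of Z: vertical lines over points with both coordinates odd integers. -/
def branchSet : Set (EuclideanSpace ℝ (Fin 3)) :=
  {x | ∃ n m : ℤ, x 0 = 2 * n + 1 ∧ x 1 = 2 * m + 1}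

lemma h_two_mul_intCast_add_one (n : ℤ) : h (2 * n + 1) = (-1) ^ n := by
  obtain ⟨k, rfl | rfl⟩ := Int.even_or_odd' n
  · have hfract : Int.fract ((2 * ((2 * k : ℤ) : ℝ) + 1 + 1) / 4) = 1 / 2 := by
      rw [show (2 * ((2 * k : ℤ) : ℝ) + 1 + 1) / 4 = k + 1 / 2 by push_cast; ring,
        Int.fract_intCast_add, Int.fract_eq_self]
      norm_num
    rw [h, hfract, Even.neg_one_zpow ⟨k, by ring⟩]
    norm_num
  · have hfract : Int.fract ((2 * ((2 * k + 1 : ℤ) : ℝ) + 1 + 1) / 4) = 0 := by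
      rw [show (2 * ((2 * k + 1 : ℤ) : ℝ) + 1 + 1) / 4 = ((k + 1 : ℤ) : ℝ) by push_cast; ring,
        Int.fract_intCast]
    rw [h, hfract, Odd.neg_one_zpow ⟨k, rfl⟩]
    norm_num

lemma exists_neg_one_zpow_eq {α : Type*} [Field α] [LinearOrder α] [IsStrictOrderedRing α]
    {a : α} (ha : |a| = 1) : ∃ n : ℤ, (-1 : α) ^ n = a := by
  rcases abs_eq (zero_le_one' α) |>.mp ha with rfl | rfl
  · exact ⟨0, zpow_zero _⟩
  · exact ⟨1, zpow_one _⟩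

lemma eq_vec3 (y : EuclideanSpace ℝ (Fin 3)) : y = vec3 (y 0) (y 1) (y 2) := by
  ext i; fin_cases i <;> rfl

lemma fin3_eq_zero_iff (y : EuclideanSpace ℝ (Fin 3)) : y = 0 ↔ y 0 = 0 ∧ y 1 = 0 ∧ y 2 = 0 := by
  refine ⟨by rintro rfl; simp, fun ⟨h0, h1, h2⟩ => ?_⟩
  ext i; fin_cases i <;> simp [h0, h1, h2]

lemma Z_vec3 (a b t : ℝ) :
    Z (vec3 a b t) = Real.exp t • vec3 (h a) (h b) (eps a * eps b * (1 - max |h a| |h b|)) :=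
  rfl

lemma Z_vec3_odd (n m : ℤ) (t : ℝ) :
    Z (vec3 (2 * n + 1) (2 * m + 1) t) =
      vec3 (Real.exp t * (-1) ^ n) (Real.exp t * (-1) ^ m) 0 := by
  have hmax : max |(-1 : ℝ) ^ n| |(-1 : ℝ) ^ m| = 1 := by simp only [abs_neg_one_zpow, max_self]
  rw [Z_vec3, h_two_mul_intCast_add_one, h_two_mul_intCast_add_one, hmax, sub_self, mul_zero]
  ext i; fin_cases i <;> simp [vec3]

lemma mem_image_Z_branchSet_iff (y : EuclideanSpace ℝ (Fin 3)) :
    y ∈ Z '' branchSet ↔ y 2 = 0 ∧ |y 0| = |y 1| ∧ y 0 ≠ 0 := by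
  constructor
  · rintro ⟨x, ⟨n, m, hx0, hx1⟩, rfl⟩
    rw [eq_vec3 x, hx0, hx1, Z_vec3_odd]
    simp [vec3, abs_mul, Real.exp_ne_zero, zpow_ne_zero]
  · rintro ⟨h2, h01, h0⟩
    have h1 : y 1 ≠ 0 := abs_ne_zero.mp (h01 ▸ abs_ne_zero.mpr h0)
    obtain ⟨n, hn⟩ := exists_neg_one_zpow_eq (a := y 0 / |y 0|) (by simp [abs_div, h0])
    obtain ⟨m, hm⟩ := exists_neg_one_zpow_eq (a := y 1 / |y 1|) (by simp [abs_div, h1])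
    refine ⟨vec3 (2 * n + 1) (2 * m + 1) (Real.log |y 0|), ⟨n, m, rfl, rfl⟩, ?_⟩
    rw [Z_vec3_odd, Real.exp_log (abs_pos.mpr h0), hn, hm,
      mul_div_cancel₀ _ (abs_ne_zero.mpr h0), h01, mul_div_cancel₀ _ (abs_ne_zero.mpr h1), ← h2]
    exact (eq_vec3 y).symm

lemma mem_lines_iff (y : EuclideanSpace ℝ (Fin 3)) :
    ((∃ t : ℝ, y = t • vec3 1 1 0) ∨ ∃ t : ℝ, y = t • vec3 (-1) 1 0) ↔
      y 2 = 0 ∧ |y 0| = |y 1| := by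
  constructor
  · rintro (⟨t, rfl⟩ | ⟨t, rfl⟩) <;> simp [vec3]
  · rintro ⟨h2, h01⟩
    rcases abs_eq_abs.mp h01 with e | e
    · exact Or.inl ⟨y 0, by ext i; fin_cases i <;> simp [vec3, e, h2]⟩
    · exact Or.inr ⟨y 1, by ext i; fin_cases i <;> simp [vec3, e, h2]⟩

/-- Z(B_Z) ∪ {0} = {t(1,1,0) : t ∈ ℝ} ∪ {t(-1,1,0) : t ∈ ℝ}. -/
theorem zorich_image_branch_set :
    Z '' branchSet ∪ {0} =
      {y : EuclideanSpace ℝ (Fin 3) | ∃ t : ℝ, y = t • vec3 1 1 0} ∪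
        {y : EuclideanSpace ℝ (Fin 3) | ∃ t : ℝ, y = t • vec3 (-1) 1 0} := by
  ext y
  simp only [Set.mem_union, Set.mem_singleton_iff, Set.mem_ofPred_eq, mem_image_Z_branchSet_iff,
    mem_lines_iff, fin3_eq_zero_iff]
  constructor
  · rintro (⟨h2, h01, -⟩ | ⟨h0, h1, h2⟩)
    · exact ⟨h2, h01⟩
    · simp [h0, h1, h2]
  · rintro ⟨h2, h01⟩
    by_cases h0 : y 0 = 0
    · exact Or.inr ⟨h0, abs_eq_zero.mp (h01 ▸ abs_eq_zero.mpr h0), h2⟩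
    · exact Or.inl ⟨h2, h01, h0⟩
end
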